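/- Let H = {H_α}_{α∈π} be a finite type Hopf π-coalgebra, λ = (λ_α) a right π-integral for H, and Λ a left integral for H_1 with λ_1(Λ) = 1. Then for every α ∈ π and a ∈ H_α, Tr(r(a) ∘ S_{α⁻¹}S_α) = ε(Λ) λ_α(a), where r(a) denotes right multiplication by a on H_α. -/

import Mathlib

open TensorProduct

/-- The canonical `k`-linear isomorphism-as-map `H α →ₗ[k] H β` induced by an equality `α = β`. -/
def Lcast (k : Type*) [CommSemiring k] {π : Type*} (H : π → Type*)
    [∀ α, AddCommMonoid (H α)] [∀ α, Module k (H α)] {α β : π} (h : α = β) :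
    H α →ₗ[k] H β := by subst h; exact LinearMap.id

/-- A Hopf `π`-coalgebra over a field `k` (Turaev): a family of `k`-algebras `H α`
with comultiplication `Δ α β : H (α * β) →ₐ[k] H α ⊗[k] H β`, counit `ε : H 1 →ₐ[k] k`
and antipode `S α : H α →ₗ[k] H α⁻¹`, satisfying coassociativity, counit and
antipode axioms. -/
structure HopfGroupCoalgebra (k : Type*) [Field k] (π : Type*) [Group π]
    (H : π → Type*) [∀ α, Ring (H α)] [∀ α, Algebra k (H α)] where
  Δ : ∀ α β : π, H (α * β) →ₐ[k] TensorProduct k (H α) (H β)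
  ε : H (1 : π) →ₐ[k] k
  S : ∀ α : π, H α →ₗ[k] H α⁻¹
  coassoc : ∀ (α β γ : π) (x : H (α * β * γ)),
    (TensorProduct.assoc k (H α) (H β) (H γ))
        (TensorProduct.map (Δ α β).toLinearMap LinearMap.id (Δ (α * β) γ x)) =
      TensorProduct.map LinearMap.id (Δ β γ).toLinearMap
        (Δ α (β * γ) (Lcast k H (mul_assoc α β γ) x))
  counit_right : ∀ (α : π) (x : H (α * 1)),
    (TensorProduct.rid k (H α))
        (TensorProduct.map LinearMap.id ε.toLinearMap (Δ α 1 x)) =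
      Lcast k H (mul_one α) x
  counit_left : ∀ (α : π) (x : H (1 * α)),
    (TensorProduct.lid k (H α))
        (TensorProduct.map ε.toLinearMap LinearMap.id (Δ 1 α x)) =
      Lcast k H (one_mul α) x
  antipode_left : ∀ (α : π) (x : H (α⁻¹ * α)),
    (LinearMap.mul' k (H α))
        (TensorProduct.map ((Lcast k H (inv_inv α)).comp (S α⁻¹)) LinearMap.id (Δ α⁻¹ α x)) =
      ε (Lcast k H (inv_mul_cancel α) x) • (1 : H α)
  antipode_right : ∀ (α : π) (x : H (α * α⁻¹)),
    (LinearMap.mul' k (H α))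
        (TensorProduct.map LinearMap.id ((Lcast k H (inv_inv α)).comp (S α⁻¹)) (Δ α α⁻¹ x)) =
      ε (Lcast k H (mul_inv_cancel α) x) • (1 : H α)

/-! The integrals produce a pair of dual bases of `H α`. Writing `Δ_{α,α⁻¹}(Λ) = Λ₁ ⊗ Λ₂`, the
right integral property of `λ`, the left integral property of `Λ`, coassociativity and the
antipode axiom give `x = λ_α(x Λ₁) S_{α⁻¹}(Λ₂)`; since `(x, y) ↦ λ_α(x y)` is then nondegenerate,
also `y = λ_α(S_{α⁻¹}(Λ₂) y) Λ₁`, whence `Tr f = λ_α(S_{α⁻¹}(Λ₂) f(Λ₁))`. For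
`f = r(a) ∘ S_{α⁻¹} S_α`, anti-multiplicativity of the antipode turns this into
`λ_α(S_{α⁻¹}(S_α(Λ₁) Λ₂) a) = ε(Λ) λ_α(a)`. -/

section Lcast

variable (k : Type*) [CommSemiring k] {π : Type*} (H : π → Type*)

theorem Lcast_Lcast [∀ α, AddCommMonoid (H α)] [∀ α, Module k (H α)] {α β γ : π}
    (h₁ : α = β) (h₂ : β = γ) (x : H α) :
    Lcast k H h₂ (Lcast k H h₁ x) = Lcast k H (h₁.trans h₂) x := by
  subst h₁ h₂; rfl

theorem Lcast_mul [∀ α, Semiring (H α)] [∀ α, Algebra k (H α)] {α β : π} (h : α = β)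
    (x y : H α) : Lcast k H h (x * y) = Lcast k H h x * Lcast k H h y := by
  subst h; rfl

theorem Lcast_one [∀ α, Semiring (H α)] [∀ α, Algebra k (H α)] {α β : π} (h : α = β) :
    Lcast k H h 1 = 1 := by
  subst h; rfl

theorem apply_Lcast [∀ α, AddCommMonoid (H α)] [∀ α, Module k (H α)] {M : Type*}
    [AddCommMonoid M] [Module k M] (f : ∀ α, H α →ₗ[k] M) {α β : π} (h : α = β) (x : H α) :
    f β (Lcast k H h x) = f α x := by
  subst h; rfl

end Lcast

theorem mul'_map_id_tmul_one_mul {R A B : Type*} [CommSemiring R] [Semiring A] [Algebra R A]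
    [Semiring B] [Algebra R B] (g : B →ₗ[R] A) (a : A) (W : A ⊗[R] B) :
    LinearMap.mul' R A (map LinearMap.id g ((a ⊗ₜ 1) * W)) =
      a * LinearMap.mul' R A (map LinearMap.id g W) := by
  induction W using TensorProduct.induction_on with
  | zero => simp
  | tmul b c => simp [Algebra.TensorProduct.tmul_mul_tmul, mul_assoc]
  | add W₁ W₂ h₁ h₂ => simp only [mul_add, map_add, h₁, h₂]

theorem lid_map_mul_tmul {R A B : Type*} [CommSemiring R] [Semiring A] [Algebra R A]
    [Semiring B] [Algebra R B] (f : A →ₗ[R] R) (Y : A ⊗[R] B) (a : A) (b : B) :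
    TensorProduct.lid R B (map f LinearMap.id (Y * (a ⊗ₜ b))) =
      TensorProduct.lid R B (map f LinearMap.id (Y * (a ⊗ₜ 1))) * b := by
  induction Y using TensorProduct.induction_on with
  | zero => simp
  | tmul c d => simp [Algebra.TensorProduct.tmul_mul_tmul]
  | add Y₁ Y₂ h₁ h₂ => simp only [add_mul, map_add, h₁, h₂]

theorem LinearMap.SeparatingLeft.separatingRight {K V : Type*} [Field K] [AddCommGroup V]
    [Module K V] [FiniteDimensional K V] {B : V →ₗ[K] V →ₗ[K] K} (hB : B.SeparatingLeft) :
    B.SeparatingRight := by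
  have hinj : Function.Injective B :=
    LinearMap.ker_eq_bot.1 (LinearMap.separatingLeft_iff_ker_eq_bot.1 hB)
  have hsurj : Function.Surjective B :=
    (LinearMap.injective_iff_surjective_of_finrank_eq_finrank
      Subspace.dual_finrank_eq.symm).1 hinj
  intro y hy
  refine (Module.forall_dual_apply_eq_zero_iff K y).1 fun φ => ?_
  obtain ⟨x, rfl⟩ := hsurj φ
  exact hy x

theorem LinearMap.trace_eq_sum_of_forall_sum_smul_eq {R M ι : Type*} [CommRing R]
    [AddCommGroup M] [Module R M] [Module.Free R M] [Module.Finite R M] (s : Finset ι)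
    (φ : ι → M →ₗ[R] R) (e : ι → M) (h : ∀ z, ∑ i ∈ s, φ i z • e i = z) (f : M →ₗ[R] M) :
    LinearMap.trace R M f = ∑ i ∈ s, φ i (f (e i)) := by
  have hf : f = ∑ i ∈ s, (φ i).smulRight (f (e i)) := by
    ext z
    conv_lhs => rw [← h z]
    simp
  rw [congrArg (LinearMap.trace R M) hf, map_sum]
  simp

namespace HopfGroupCoalgebra

variable {k : Type*} [Field k] {π : Type*} [Group π] {H : π → Type*}
  [∀ α, Ring (H α)] [∀ α, Algebra k (H α)] (Hc : HopfGroupCoalgebra k π H)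

/-- `Δ_{α,β}` read on `H γ` for any `γ = αβ`, such as `Δ_{α,α⁻¹} : H 1 → H α ⊗ H α⁻¹`. -/
noncomputable def comul {α β γ : π} (h : α * β = γ) : H γ →ₗ[k] H α ⊗[k] H β :=
  (Hc.Δ α β).toLinearMap ∘ₗ Lcast k H h.symm

theorem comul_mul {α β γ : π} (h : α * β = γ) (x y : H γ) :
    Hc.comul h (x * y) = Hc.comul h x * Hc.comul h y := by
  simp [comul, Lcast_mul]

theorem comul_one {α β γ : π} (h : α * β = γ) : Hc.comul h 1 = 1 := by
  simp [comul, Lcast_one]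

theorem comul_coassoc {α β γ μ ν δ : π} (hμ : α * β = μ) (hν : β * γ = ν)
    (hμγ : μ * γ = δ) (hαν : α * ν = δ) (x : H δ) :
    TensorProduct.assoc k (H α) (H β) (H γ)
        (TensorProduct.map (Hc.comul hμ) LinearMap.id (Hc.comul hμγ x)) =
      TensorProduct.map LinearMap.id (Hc.comul hν) (Hc.comul hαν x) := by
  subst hμ hν hμγ
  exact Hc.coassoc α β γ x

theorem lid_map_counit_comul (α : π) (x : H α) :
    TensorProduct.lid k (H α)
      (TensorProduct.map Hc.ε.toLinearMap LinearMap.id (Hc.comul (one_mul α) x)) = x := by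
  rw [comul, LinearMap.comp_apply, AlgHom.toLinearMap_apply, Hc.counit_left, Lcast_Lcast]
  rfl

theorem rid_map_counit_comul (α : π) (x : H α) :
    TensorProduct.rid k (H α)
      (TensorProduct.map LinearMap.id Hc.ε.toLinearMap (Hc.comul (mul_one α) x)) = x := by
  rw [comul, LinearMap.comp_apply, AlgHom.toLinearMap_apply, Hc.counit_right, Lcast_Lcast]
  rfl

/-- `S_{α⁻¹}`, landing in `H α`. -/
noncomputable def antipodeInv (α : π) : H α⁻¹ →ₗ[k] H α :=
  Lcast k H (inv_inv α) ∘ₗ Hc.S α⁻¹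

theorem mul'_map_id_antipodeInv_comul (α : π) (x : H 1) :
    LinearMap.mul' k (H α)
        (TensorProduct.map LinearMap.id (Hc.antipodeInv α) (Hc.comul (mul_inv_cancel α) x)) =
      Hc.ε x • 1 := by
  rw [comul, LinearMap.comp_apply, AlgHom.toLinearMap_apply, antipodeInv, Hc.antipode_right,
    Lcast_Lcast]
  rfl

theorem mul'_map_antipode_id_comul (α : π) (x : H 1) :
    LinearMap.mul' k (H α⁻¹)
        (map (Hc.S α) LinearMap.id (Hc.comul (mul_inv_cancel α) x)) = Hc.ε x • 1 := by
  -- `α⁻¹⁻¹` is not definitionally `α`: transport the axiom at `β = α⁻¹` along `β⁻¹ = α`.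
  have key (β : π) (h : β⁻¹ = α) :
      LinearMap.mul' k (H β)
        (map (Lcast k H (by rw [← h, inv_inv]) ∘ₗ Hc.S α) LinearMap.id
          (Hc.comul (γ := 1) (by rw [← h, inv_mul_cancel]) x)) = Hc.ε x • 1 := by
    subst h
    rw [comul, LinearMap.comp_apply, AlgHom.toLinearMap_apply, Hc.antipode_left, Lcast_Lcast]
    rfl
  exact key α⁻¹ (inv_inv α)

theorem mul'_map_id_antipode_comul (α : π) (x : H 1) :
    LinearMap.mul' k (H α⁻¹)
        (map LinearMap.id (Hc.S α) (Hc.comul (inv_mul_cancel α) x)) = Hc.ε x • 1 := by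
  have key (β : π) (h : β⁻¹ = α) :
      LinearMap.mul' k (H β)
        (map LinearMap.id (Lcast k H (by rw [← h, inv_inv]) ∘ₗ Hc.S α)
          (Hc.comul (γ := 1) (by rw [← h, mul_inv_cancel]) x)) = Hc.ε x • 1 := by
    subst h
    rw [comul, LinearMap.comp_apply, AlgHom.toLinearMap_apply, Hc.antipode_right, Lcast_Lcast]
    rfl
  exact key α⁻¹ (inv_inv α)

theorem antipode_one (α : π) : Hc.S α 1 = 1 := by
  simpa [comul_one, Algebra.TensorProduct.one_def] using Hc.mul'_map_antipode_id_comul α 1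

/-- In Sweedler notation, `S(z₍₁₎) z₍₂₎ ⊗ z₍₃₎ = 1 ⊗ z`. -/
theorem sum_antipode_tmul_one_mul_comul (α : π) (z : H α) (s : Finset (H α × H 1))
    (hs : Hc.comul (mul_one α) z = ∑ p ∈ s, p.1 ⊗ₜ p.2) :
    ∑ p ∈ s, (Hc.S α p.1 ⊗ₜ (1 : H α)) * Hc.comul (inv_mul_cancel α) p.2 = 1 ⊗ₜ z := by
  let Γ : H α ⊗[k] (H α⁻¹ ⊗[k] H α) →ₗ[k] H α⁻¹ ⊗[k] H α :=
    lift ((LinearMap.mul k _).comp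
      ((Algebra.TensorProduct.includeLeft : H α⁻¹ →ₐ[k] H α⁻¹ ⊗[k] H α).toLinearMap ∘ₗ Hc.S α))
  have hΓ (Y : (H α ⊗[k] H α⁻¹) ⊗[k] H α) :
      Γ (TensorProduct.assoc k _ _ _ Y) =
        map (LinearMap.mul' k (H α⁻¹) ∘ₗ map (Hc.S α) LinearMap.id) LinearMap.id Y := by
    induction Y using TensorProduct.induction_on with
    | zero => simp
    | tmul V w =>
      induction V using TensorProduct.induction_on with
      | zero => simp
      | tmul u v => simp [Γ, Algebra.TensorProduct.tmul_mul_tmul]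
      | add V₁ V₂ h₁ h₂ => simp only [add_tmul, map_add, h₁, h₂]
    | add Y₁ Y₂ h₁ h₂ => simp only [map_add, h₁, h₂]
  obtain ⟨t, ht⟩ := exists_finset (Hc.comul (one_mul α) z)
  calc ∑ p ∈ s, (Hc.S α p.1 ⊗ₜ (1 : H α)) * Hc.comul (inv_mul_cancel α) p.2
      = Γ (map LinearMap.id (Hc.comul (inv_mul_cancel α)) (Hc.comul (mul_one α) z)) := by
        simp [hs, Γ]
    _ = Γ (TensorProduct.assoc k _ _ _
          (map (Hc.comul (mul_inv_cancel α)) LinearMap.id (Hc.comul (one_mul α) z))) := by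
        rw [Hc.comul_coassoc]
    _ = ∑ q ∈ t, (Hc.ε q.1 • (1 : H α⁻¹)) ⊗ₜ q.2 := by
        simp [hΓ, ht, mul'_map_antipode_id_comul]
    _ = 1 ⊗ₜ z := by
        conv_rhs => rw [← Hc.lid_map_counit_comul α z, ht]
        simp [tmul_sum, smul_tmul]

theorem antipode_mul (α : π) (x y : H α) : Hc.S α (x * y) = Hc.S α y * Hc.S α x := by
  let D := Hc.comul (inv_mul_cancel α)
  obtain ⟨sx, hx⟩ := exists_finset (Hc.comul (mul_one α) x)
  obtain ⟨sy, hy⟩ := exists_finset (Hc.comul (mul_one α) y)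
  have counit_expand (z : H α) (s : Finset (H α × H 1))
      (hs : Hc.comul (mul_one α) z = ∑ p ∈ s, p.1 ⊗ₜ p.2) : ∑ p ∈ s, Hc.ε p.2 • p.1 = z := by
    simpa [hs] using Hc.rid_map_counit_comul α z
  have pivot : 1 ⊗ₜ (x * y) =
      ∑ q ∈ sy, ∑ p ∈ sx, ((Hc.S α q.1 * Hc.S α p.1) ⊗ₜ (1 : H α)) * D (p.2 * q.2) := by
    calc 1 ⊗ₜ (x * y) = (1 ⊗ₜ x) * ∑ q ∈ sy, (Hc.S α q.1 ⊗ₜ (1 : H α)) * D q.2 := by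
          rw [Hc.sum_antipode_tmul_one_mul_comul α y sy hy, Algebra.TensorProduct.tmul_mul_tmul,
            one_mul]
      _ = ∑ q ∈ sy, (Hc.S α q.1 ⊗ₜ (1 : H α)) * (1 ⊗ₜ x) * D q.2 := by
          simp only [Finset.mul_sum, ← mul_assoc, Algebra.TensorProduct.tmul_mul_tmul, one_mul,
            mul_one]
      _ = _ := by
          simp only [← Hc.sum_antipode_tmul_one_mul_comul α x sx hx, Finset.mul_sum,
            Finset.sum_mul, D, comul_mul, ← mul_assoc, Algebra.TensorProduct.tmul_mul_tmul,
            mul_one]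
  calc Hc.S α (x * y)
      = LinearMap.mul' k (H α⁻¹) (map LinearMap.id (Hc.S α) (1 ⊗ₜ (x * y))) := by simp
    _ = ∑ q ∈ sy, ∑ p ∈ sx, Hc.ε (p.2 * q.2) • (Hc.S α q.1 * Hc.S α p.1) := by
        simp only [pivot, map_sum, mul'_map_id_tmul_one_mul, D, mul'_map_id_antipode_comul,
          mul_smul_comm, mul_one]
    _ = Hc.S α y * Hc.S α x := by
        rw [← counit_expand x sx hx, ← counit_expand y sy hy, map_sum, map_sum,
          Finset.sum_mul_sum]
        simp [smul_smul, mul_comm]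

theorem antipodeInv_mul (α : π) (u v : H α⁻¹) :
    Hc.antipodeInv α (u * v) = Hc.antipodeInv α v * Hc.antipodeInv α u := by
  simp [antipodeInv, antipode_mul, Lcast_mul]

theorem antipodeInv_one (α : π) : Hc.antipodeInv α 1 = 1 := by
  simp [antipodeInv, antipode_one, Lcast_one]

section Integrals

def IsRightIntegral (lam : ∀ α : π, H α →ₗ[k] k) : Prop :=
  ∀ (α β : π) (x : H (α * β)),
    TensorProduct.lid k (H β) (map (lam α) LinearMap.id (Hc.Δ α β x)) = lam (α * β) x • 1

variable {lam : ∀ α : π, H α →ₗ[k] k} {Λ : H (1 : π)}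

theorem lid_map_lam_comul (hlam : Hc.IsRightIntegral lam) (α : π) (x : H α) :
    TensorProduct.lid k (H α) (map (lam 1) LinearMap.id (Hc.comul (one_mul α) x)) =
      lam α x • 1 := by
  simpa [comul, apply_Lcast] using hlam 1 α (Lcast k H (one_mul α).symm x)

theorem sum_lam_mul_smul_antipodeInv
    (hlam : Hc.IsRightIntegral lam)
    (hΛ : ∀ x : H (1 : π), x * Λ = Hc.ε x • Λ) (hnorm : lam 1 Λ = 1)
    (α : π) (s : Finset (H α × H α⁻¹))
    (hs : Hc.comul (mul_inv_cancel α) Λ = ∑ p ∈ s, p.1 ⊗ₜ p.2) (x : H α) :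
    ∑ p ∈ s, lam α (x * p.1) • Hc.antipodeInv α p.2 = x := by
  let L : H 1 ⊗[k] H α →ₗ[k] H α :=
    (TensorProduct.lid k (H α)).toLinearMap ∘ₗ map (lam 1) LinearMap.id
  let X := Hc.comul (one_mul α) x
  let Φ : (H 1 ⊗[k] H α) ⊗[k] H α⁻¹ →ₗ[k] H α :=
    LinearMap.mul' k (H α) ∘ₗ map (L ∘ₗ LinearMap.mulLeft k X) (Hc.antipodeInv α)
  have left_integral (Y : H 1 ⊗[k] H α) :
      L (Y * (Λ ⊗ₜ 1)) = TensorProduct.lid k (H α) (map Hc.ε.toLinearMap LinearMap.id Y) := by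
    induction Y using TensorProduct.induction_on with
    | zero => simp
    | tmul c d => simp [L, Algebra.TensorProduct.tmul_mul_tmul, hΛ, hnorm]
    | add Y₁ Y₂ h₁ h₂ => simp only [add_mul, map_add, h₁, h₂]
  have Φ_assoc_symm_tmul (c : H 1) (V : H α ⊗[k] H α⁻¹) :
      Φ ((TensorProduct.assoc k _ _ _).symm (c ⊗ₜ V)) =
        L (X * (c ⊗ₜ 1)) * LinearMap.mul' k (H α) (map LinearMap.id (Hc.antipodeInv α) V) := by
    induction V using TensorProduct.induction_on with
    | zero => simp
    | tmul v w => simp [Φ, L, lid_map_mul_tmul _ X c v, mul_assoc]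
    | add V₁ V₂ h₁ h₂ => simp only [tmul_add, map_add, h₁, h₂, mul_add]
  obtain ⟨t, ht⟩ := exists_finset (Hc.comul (mul_one (1 : π)) Λ)
  calc ∑ p ∈ s, lam α (x * p.1) • Hc.antipodeInv α p.2
      = Φ (map (Hc.comul (one_mul α)) LinearMap.id (Hc.comul (mul_inv_cancel α) Λ)) := by
        simp [hs, Φ, L, X, ← comul_mul, Hc.lid_map_lam_comul hlam]
    _ = Φ ((TensorProduct.assoc k _ _ _).symm
          (map LinearMap.id (Hc.comul (mul_inv_cancel α)) (Hc.comul (mul_one 1) Λ))) := by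
        rw [← Hc.comul_coassoc, LinearEquiv.symm_apply_apply]
    _ = ∑ j ∈ t, Hc.ε j.2 • L (X * (j.1 ⊗ₜ 1)) := by
        simp [ht, Φ_assoc_symm_tmul, mul'_map_id_antipodeInv_comul]
    _ = L (X * (Λ ⊗ₜ 1)) := by
        conv_rhs => rw [← Hc.rid_map_counit_comul 1 Λ, ht]
        simp [sum_tmul, Finset.mul_sum, smul_tmul]
    _ = x := by rw [left_integral, Hc.lid_map_counit_comul]

theorem sum_lam_antipodeInv_mul_smul [∀ α, FiniteDimensional k (H α)]
    (hlam : Hc.IsRightIntegral lam)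
    (hΛ : ∀ x : H (1 : π), x * Λ = Hc.ε x • Λ) (hnorm : lam 1 Λ = 1)
    (α : π) (s : Finset (H α × H α⁻¹))
    (hs : Hc.comul (mul_inv_cancel α) Λ = ∑ p ∈ s, p.1 ⊗ₜ p.2) (y : H α) :
    ∑ p ∈ s, lam α (Hc.antipodeInv α p.2 * y) • p.1 = y := by
  let B : H α →ₗ[k] H α →ₗ[k] k := (LinearMap.mul k (H α)).compr₂ (lam α)
  have expand := Hc.sum_lam_mul_smul_antipodeInv hlam hΛ hnorm α s hs
  have hB : B.SeparatingLeft := fun x hx => by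
    rw [← expand x]
    simp [B] at hx
    simp [hx]
  rw [← sub_eq_zero]
  refine hB.separatingRight _ fun x => ?_
  have pairing :
      lam α (x * ∑ p ∈ s, lam α (Hc.antipodeInv α p.2 * y) • p.1) = lam α (x * y) := by
    conv_rhs => rw [← expand x]
    simp [Finset.mul_sum, Finset.sum_mul, mul_comm]
  simp [B, mul_sub, pairing]

theorem trace_eq_sum_lam_antipodeInv_mul [∀ α, FiniteDimensional k (H α)]
    (hlam : Hc.IsRightIntegral lam)
    (hΛ : ∀ x : H (1 : π), x * Λ = Hc.ε x • Λ) (hnorm : lam 1 Λ = 1)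
    (α : π) (s : Finset (H α × H α⁻¹))
    (hs : Hc.comul (mul_inv_cancel α) Λ = ∑ p ∈ s, p.1 ⊗ₜ p.2) (f : H α →ₗ[k] H α) :
    LinearMap.trace k (H α) f = ∑ p ∈ s, lam α (Hc.antipodeInv α p.2 * f p.1) :=
  LinearMap.trace_eq_sum_of_forall_sum_smul_eq s
    (fun p => lam α ∘ₗ LinearMap.mulLeft k (Hc.antipodeInv α p.2)) Prod.fst
    (Hc.sum_lam_antipodeInv_mul_smul hlam hΛ hnorm α s hs) f

end Integrals

end HopfGroupCoalgebra

/-- Let `H` be a finite type Hopf `π`-coalgebra, `λ = (λ_α)` a right `π`-integral for `H`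
and `Λ` a left integral for `H 1` with `λ_1 Λ = 1`.  Then for every `α` and `a ∈ H α`,
`Tr (r(a) ∘ S_{α⁻¹} S_α) = ε(Λ) λ_α(a)`, where `r(a)` is right multiplication by `a`. -/
theorem trace_mulRight_antipode_square (k : Type*) [Field k] (π : Type*) [Group π]
    (H : π → Type*) [∀ α, Ring (H α)] [∀ α, Algebra k (H α)]
    [∀ α, FiniteDimensional k (H α)]
    (Hc : HopfGroupCoalgebra k π H)
    (lam : ∀ α : π, H α →ₗ[k] k)
    (hlam : ∀ (α β : π) (x : H (α * β)),
      (TensorProduct.lid k (H β))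
          (TensorProduct.map (lam α) LinearMap.id (Hc.Δ α β x)) =
        lam (α * β) x • (1 : H β))
    (Λ : H (1 : π))
    (hΛ : ∀ x : H (1 : π), x * Λ = Hc.ε x • Λ)
    (hnorm : lam 1 Λ = 1) :
    ∀ (α : π) (a : H α),
      LinearMap.trace k (H α)
          ((LinearMap.mulRight k a).comp
            ((Lcast k H (inv_inv α)).comp ((Hc.S α⁻¹).comp (Hc.S α)))) =
        Hc.ε Λ * lam α a := by
  intro α a
  obtain ⟨s, hs⟩ := exists_finset (Hc.comul (mul_inv_cancel α) Λ)
  have antipode_sum : ∑ p ∈ s, Hc.S α p.1 * p.2 = Hc.ε Λ • 1 := by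
    simpa [hs] using Hc.mul'_map_antipode_id_comul α Λ
  change LinearMap.trace k (H α) (LinearMap.mulRight k a ∘ₗ Hc.antipodeInv α ∘ₗ Hc.S α) = _
  rw [Hc.trace_eq_sum_lam_antipodeInv_mul hlam hΛ hnorm α s hs]
  calc ∑ p ∈ s, lam α (Hc.antipodeInv α p.2 * (Hc.antipodeInv α (Hc.S α p.1) * a))
      = lam α (Hc.antipodeInv α (∑ p ∈ s, Hc.S α p.1 * p.2) * a) := by
        simp [Hc.antipodeInv_mul, Finset.sum_mul, mul_assoc]
    _ = Hc.ε Λ * lam α a := by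
        simp [antipode_sum, Hc.antipodeInv_one]
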